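/- arXiv:1310.2296 — 2 statements merged into one kernel-verified Lean document; each statement's English description precedes it below -/
import Mathlib

section
/- Single-letter decoder lemma. Let Y, V, W be random variables taking values in finite sets 𝒴, 𝒱, 𝒲 on a common probability space such that Y and W are conditionally independent given V (Markov chain Y − V − W). Then for every finite set 𝒴̂, every distortion measure d : 𝒴×𝒴̂ → [0,∞) and every function f : 𝒱×𝒲 → 𝒴̂, there exists a function g : 𝒱 → 𝒴̂ such that E[d(Y, g(V))] ≤ E[d(Y, f(V,W))]. -/
open scoped BigOperators

noncomputable section

namespace IRSC

attribute [local instance] Classical.propDecidable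

/-- A bundled finite alphabet. -/
structure FinAlph where
  carrier : Type
  [fin : Fintype carrier]

attribute [instance] FinAlph.fin

section Basic

variable {Ω α β γ : Type*} [Fintype Ω]

/-- `μ` is a probability mass function on the finite type `Ω`. -/
def IsPMF (μ : Ω → ℝ) : Prop := (∀ ω, 0 ≤ μ ω) ∧ ∑ ω, μ ω = 1

/-- The probability that the random variable `f` takes the value `a` under `μ`. -/
def probOf (μ : Ω → ℝ) (f : Ω → α) (a : α) : ℝ := ∑ ω, if f ω = a then μ ω else 0

/-- The expectation of the real-valued random variable `g` under `μ`. -/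
def expect (μ : Ω → ℝ) (g : Ω → ℝ) : ℝ := ∑ ω, μ ω * g ω

/-- The Shannon entropy (base 2) `H(f)` of a random variable `f` under `μ`. -/
def entropy [Fintype α] (μ : Ω → ℝ) (f : Ω → α) : ℝ :=
  -∑ a, probOf μ f a * Real.logb 2 (probOf μ f a)

/-- The conditional entropy `H(f | g)` under `μ`. -/
def condEntropy [Fintype α] [Fintype β] (μ : Ω → ℝ) (f : Ω → α) (g : Ω → β) : ℝ :=
  entropy μ (fun ω => (f ω, g ω)) - entropy μ g

/-- The conditional mutual information `I(f ; g | h)` under `μ`. -/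
def condMI [Fintype α] [Fintype β] [Fintype γ]
    (μ : Ω → ℝ) (f : Ω → α) (g : Ω → β) (h : Ω → γ) : ℝ :=
  condEntropy μ f h + condEntropy μ g h - condEntropy μ (fun ω => (f ω, g ω)) h

/-- `MarkovChain μ f g h` says that `f − g − h` forms a Markov chain under `μ`, i.e.
`f` and `h` are conditionally independent given `g`. -/
def MarkovChain (μ : Ω → ℝ) (f : Ω → α) (g : Ω → β) (h : Ω → γ) : Prop :=
  ∀ a b c,
    probOf μ (fun ω => (f ω, g ω, h ω)) (a, b, c) * probOf μ g b =
      probOf μ (fun ω => (f ω, g ω)) (a, b) * probOf μ (fun ω => (g ω, h ω)) (b, c)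

end Basic

/-- The i.i.d. distribution of `n` copies of `p`. -/
def iid {W : Type*} [Fintype W] (p : W → ℝ) (n : ℕ) : (Fin n → W) → ℝ :=
  fun w => ∏ i, p (w i)

/-- The past `(x_1, …, x_{i-1})` of a sequence `x` relative to position `i`. -/
def past {n : ℕ} {α : Type*} (i : Fin n) (x : Fin n → α) : {j : Fin n // j < i} → α :=
  fun j => x j.1

/-- The future `(x_{i+1}, …, x_n)` of a sequence `x` relative to position `i`. -/
def fut {n : ℕ} {α : Type*} (i : Fin n) (x : Fin n → α) : {j : Fin n // i < j} → α :=
  fun j => x j.1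

section Aux

variable {Ω α : Type*} [Fintype Ω] [Fintype α]

lemma probOf_nonneg (μ : Ω → ℝ) (hμ : ∀ ω, 0 ≤ μ ω) (f : Ω → α) (a : α) :
    0 ≤ probOf μ f a := by
  refine Finset.sum_nonneg fun ω _ => ?_
  split <;> simp [hμ ω]

lemma expect_comp (μ : Ω → ℝ) (F : Ω → α) (φ : α → ℝ) :
    expect μ (fun ω => φ (F ω)) = ∑ a, probOf μ F a * φ a := by
  unfold expect probOf
  simp_rw [Finset.sum_mul]
  rw [Finset.sum_comm]
  refine Finset.sum_congr rfl fun ω _ => ?_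
  simp [ite_mul, Finset.sum_ite_eq]

end Aux

/-- **Single-letter decoder lemma.**
If `Y − V − W` is a Markov chain on a finite probability space, then for every distortion
measure `d` and every decoder `f(V, W)` there is a decoder `g(V)` using only `V` that does
at least as well: `E[d(Y, g(V))] ≤ E[d(Y, f(V,W))]`. -/
theorem single_letter_decoder
    {Ω 𝒴 𝒱 𝒲 : Type*} [Fintype Ω] [Fintype 𝒴] [Fintype 𝒱] [Fintype 𝒲]
    (μ : Ω → ℝ) (hμ : IsPMF μ)
    (Y : Ω → 𝒴) (V : Ω → 𝒱) (W : Ω → 𝒲)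
    (hMarkov : MarkovChain μ Y V W)
    (Yh : Type*) [Fintype Yh] [Nonempty Yh]
    (d : 𝒴 → Yh → ℝ) (hd : ∀ y yv, 0 ≤ d y yv)
    (f : 𝒱 → 𝒲 → Yh) :
    ∃ g : 𝒱 → Yh,
      expect μ (fun ω => d (Y ω) (g (V ω))) ≤ expect μ (fun ω => d (Y ω) (f (V ω) (W ω))) := by
  classical
  obtain ⟨hμ0, hμ1⟩ := hμ
  -- conditional (unnormalized) distortion
  set A : 𝒱 → Yh → ℝ :=
    fun v yh => ∑ y, probOf μ (fun ω => (Y ω, V ω)) (y, v) * d y yh with hA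
  -- choose minimizer
  have hex : ∀ v : 𝒱, ∃ yh : Yh, ∀ yh' : Yh, A v yh ≤ A v yh' := by
    intro v
    obtain ⟨yh, -, hyh⟩ :=
      Finset.exists_min_image Finset.univ (A v) Finset.univ_nonempty
    exact ⟨yh, fun yh' => hyh yh' (Finset.mem_univ _)⟩
  choose g hg using hex
  refine ⟨g, ?_⟩
  -- rewrite both expectations
  have hL : expect μ (fun ω => d (Y ω) (g (V ω))) = ∑ v, A v (g v) := by
    have := expect_comp μ (fun ω => (Y ω, V ω)) (fun p => d p.1 (g p.2))
    rw [this, Fintype.sum_prod_type, Finset.sum_comm]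
  have hR : expect μ (fun ω => d (Y ω) (f (V ω) (W ω))) =
      ∑ v, ∑ w, ∑ y,
        probOf μ (fun ω => (Y ω, V ω, W ω)) (y, v, w) * d y (f v w) := by
    have := expect_comp μ (fun ω => (Y ω, V ω, W ω)) (fun p => d p.1 (f p.2.1 p.2.2))
    rw [this, Fintype.sum_prod_type]
    simp_rw [Fintype.sum_prod_type]
    rw [Finset.sum_comm]
    exact Finset.sum_congr rfl fun v _ => Finset.sum_comm
  rw [hL, hR]
  refine Finset.sum_le_sum fun v _ => ?_
  -- per-v inequality
  set S : ℝ := ∑ w, ∑ y,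
      probOf μ (fun ω => (Y ω, V ω, W ω)) (y, v, w) * d y (f v w) with hS
  have hSnn : 0 ≤ S := by
    refine Finset.sum_nonneg fun w _ => Finset.sum_nonneg fun y _ => ?_
    exact mul_nonneg (probOf_nonneg μ hμ0 _ _) (hd _ _)
  have hpVnn : 0 ≤ probOf μ V v := probOf_nonneg μ hμ0 V v
  -- marginalizations
  have hmargYV : ∑ y, probOf μ (fun ω => (Y ω, V ω)) (y, v) = probOf μ V v := by
    unfold probOf
    rw [Finset.sum_comm]
    refine Finset.sum_congr rfl fun ω _ => ?_
    by_cases h : V ω = v <;> simp [h, Prod.ext_iff, Finset.sum_ite_eq]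
  have hmargVW : ∑ w, probOf μ (fun ω => (V ω, W ω)) (v, w) = probOf μ V v := by
    unfold probOf
    rw [Finset.sum_comm]
    refine Finset.sum_congr rfl fun ω _ => ?_
    by_cases h : V ω = v <;> simp [h, Prod.ext_iff, Finset.sum_ite_eq]
  -- key identity via Markov
  have hkey : probOf μ V v * S = ∑ w, probOf μ (fun ω => (V ω, W ω)) (v, w) * A v (f v w) := by
    rw [hS, Finset.mul_sum]
    refine Finset.sum_congr rfl fun w _ => ?_
    rw [hA, Finset.mul_sum, Finset.mul_sum]
    refine Finset.sum_congr rfl fun y _ => ?_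
    have := hMarkov y v w
    linear_combination d y (f v w) * this
  rcases eq_or_lt_of_le hpVnn with hpV0 | hpVpos
  · -- P(V = v) = 0 : A v (g v) = 0
    have hzero : ∀ y, probOf μ (fun ω => (Y ω, V ω)) (y, v) = 0 := by
      intro y
      have hnn : ∀ y' ∈ Finset.univ, (0:ℝ) ≤ probOf μ (fun ω => (Y ω, V ω)) (y', v) :=
        fun y' _ => probOf_nonneg μ hμ0 _ _
      have hsum : ∑ y', probOf μ (fun ω => (Y ω, V ω)) (y', v) = 0 := by
        rw [hmargYV, ← hpV0]
      exact (Finset.sum_eq_zero_iff_of_nonneg hnn).mp hsum y (Finset.mem_univ y)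
    have : A v (g v) = 0 := by
      rw [hA]
      exact Finset.sum_eq_zero fun y _ => by rw [hzero y, zero_mul]
    rw [this]; exact hSnn
  · -- P(V = v) > 0
    have hineq : probOf μ V v * A v (g v) ≤ probOf μ V v * S := by
      rw [hkey, ← hmargVW, Finset.sum_mul]
      refine Finset.sum_le_sum fun w _ => ?_
      exact mul_le_mul_of_nonneg_left (hg v (f v w)) (probOf_nonneg μ hμ0 _ _)
    exact le_of_mul_le_mul_left hineq hpVpos

end IRSC
end
end

section
/- Markov conditions for the auxiliary random variables in the DSC/delivery converse. Fix a blocklength n and a DSC/delivery code, and set M_AR = φ_AR(X^n), M_BR = φ_BR(Y^n), M_RA = φ_RA(Z^n,M_AR,M_BR), M_RB = φ_RB(Z^n,M_AR,M_BR). For each i ∈ {1,…,n}, define U_{1,i} = (M_AR, X^{i−1}, Y_{i+1}^n), U_{2,i} = (M_BR, X_{i+1}^n, Y^{i−1}), V_{1,i} = M_RB, V_{2,i} = M_RA. Then the following Markov chains hold: (i) U_{1,i} − X_i − (Y_i, Z_i); (ii) U_{2,i} − Y_i − (X_i, Z_i); (iii) (V_{1,i}, V_{2,i}) − (Z_i,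 U_{1,i}, U_{2,i}) − (X_i, Y_i). -/
open scoped BigOperators

noncomputable section

namespace IRSC

attribute [local instance] Classical.propDecidable

section AuxMarkov

lemma ite_prod_split {C P Q : Prop} [Decidable C] [Decidable P] [Decidable Q]
    (hiff : C ↔ P ∧ Q) (x y : ℝ) :
    (if C then x * y else 0) = (if P then x else 0) * (if Q then y else 0) := by
  by_cases hP : P <;> by_cases hQ : Q <;> simp [hP, hQ, hiff]

lemma markov_core {Ω₁ Ω₂ α β₁ β₂ β γ : Type*} [Fintype Ω₁] [Fintype Ω₂]
    (μ₁ : Ω₁ → ℝ) (μ₂ : Ω₂ → ℝ)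
    (G₂ : Ω₂ → β₂) (A : Ω₁ → β₂ → β₁) (e : β₁ → β₂ → β)
    (he : ∀ b₁ b₂ b₁' b₂', e b₁ b₂ = e b₁' b₂' → b₁ = b₁' ∧ b₂ = b₂')
    (F : Ω₂ → β → α) (h₁ : Ω₁ → γ)
    (f : Ω₁ × Ω₂ → α) (g : Ω₁ × Ω₂ → β) (h : Ω₁ × Ω₂ → γ)
    (hg : ∀ ω, g ω = e (A ω.1 (G₂ ω.2)) (G₂ ω.2))
    (hf : ∀ ω, f ω = F ω.2 (g ω))
    (hh : ∀ ω, h ω = h₁ ω.1) :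
    MarkovChain (fun ω : Ω₁ × Ω₂ => μ₁ ω.1 * μ₂ ω.2) f g h := by
  intro a b c
  by_cases hb : ∃ b₁ b₂, e b₁ b₂ = b
  · obtain ⟨b₁, b₂, rfl⟩ := hb
    have key : ∀ ω : Ω₁ × Ω₂, g ω = e b₁ b₂ ↔ A ω.1 b₂ = b₁ ∧ G₂ ω.2 = b₂ := by
      intro ω
      constructor
      · intro hq
        obtain ⟨h1, h2⟩ := he _ _ _ _ ((hg ω).symm.trans hq)
        exact ⟨h2 ▸ h1, h2⟩
      · rintro ⟨h1, h2⟩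
        rw [hg ω, h2, h1]
    have e1 : probOf (fun ω : Ω₁ × Ω₂ => μ₁ ω.1 * μ₂ ω.2)
          (fun ω => (f ω, g ω, h ω)) (a, e b₁ b₂, c)
        = (∑ ω₁, if A ω₁ b₂ = b₁ ∧ h₁ ω₁ = c then μ₁ ω₁ else 0)
          * (∑ ω₂, if G₂ ω₂ = b₂ ∧ F ω₂ (e b₁ b₂) = a then μ₂ ω₂ else 0) := by
      unfold probOf
      rw [Fintype.sum_prod_type, Finset.sum_mul_sum]
      have hiff : ∀ ω₁ ω₂, ((f (ω₁, ω₂), g (ω₁, ω₂), h (ω₁, ω₂)) = (a, e b₁ b₂, c))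
          ↔ ((A ω₁ b₂ = b₁ ∧ h₁ ω₁ = c) ∧ (G₂ ω₂ = b₂ ∧ F ω₂ (e b₁ b₂) = a)) := by
        intro ω₁ ω₂
        rw [Prod.mk.injEq, Prod.mk.injEq]
        constructor
        · rintro ⟨hfa, hgb, hc⟩
          obtain ⟨h1, h2⟩ := (key (ω₁, ω₂)).mp hgb
          exact ⟨⟨h1, by rw [← hh (ω₁, ω₂)]; exact hc⟩, h2,
            by rw [← hgb, ← hf (ω₁, ω₂)]; exact hfa⟩
        · rintro ⟨⟨h1, hc⟩, h2, h3⟩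
          have hgb := (key (ω₁, ω₂)).mpr ⟨h1, h2⟩
          exact ⟨by rw [hf (ω₁, ω₂), hgb]; exact h3, hgb, by rw [hh (ω₁, ω₂)]; exact hc⟩
      refine Finset.sum_congr rfl fun ω₁ _ => Finset.sum_congr rfl fun ω₂ _ => ?_
      by_cases h1 : A ω₁ b₂ = b₁ ∧ h₁ ω₁ = c <;>
        by_cases h2 : G₂ ω₂ = b₂ ∧ F ω₂ (e b₁ b₂) = a <;>
        simp [hiff ω₁ ω₂, h1, h2]
    have e2 : probOf (fun ω : Ω₁ × Ω₂ => μ₁ ω.1 * μ₂ ω.2) g (e b₁ b₂)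
        = (∑ ω₁, if A ω₁ b₂ = b₁ then μ₁ ω₁ else 0)
          * (∑ ω₂, if G₂ ω₂ = b₂ then μ₂ ω₂ else 0) := by
      unfold probOf
      rw [Fintype.sum_prod_type, Finset.sum_mul_sum]
      refine Finset.sum_congr rfl fun ω₁ _ => Finset.sum_congr rfl fun ω₂ _ => ?_
      by_cases h1 : A ω₁ b₂ = b₁ <;> by_cases h2 : G₂ ω₂ = b₂ <;>
        simp [key (ω₁, ω₂), h1, h2]
    have e3 : probOf (fun ω : Ω₁ × Ω₂ => μ₁ ω.1 * μ₂ ω.2)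
          (fun ω => (f ω, g ω)) (a, e b₁ b₂)
        = (∑ ω₁, if A ω₁ b₂ = b₁ then μ₁ ω₁ else 0)
          * (∑ ω₂, if G₂ ω₂ = b₂ ∧ F ω₂ (e b₁ b₂) = a then μ₂ ω₂ else 0) := by
      unfold probOf
      rw [Fintype.sum_prod_type, Finset.sum_mul_sum]
      have hiff : ∀ ω₁ ω₂, ((f (ω₁, ω₂), g (ω₁, ω₂)) = (a, e b₁ b₂))
          ↔ ((A ω₁ b₂ = b₁) ∧ (G₂ ω₂ = b₂ ∧ F ω₂ (e b₁ b₂) = a)) := by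
        intro ω₁ ω₂
        rw [Prod.mk.injEq]
        constructor
        · rintro ⟨hfa, hgb⟩
          obtain ⟨h1, h2⟩ := (key (ω₁, ω₂)).mp hgb
          exact ⟨h1, h2, by rw [← hgb, ← hf (ω₁, ω₂)]; exact hfa⟩
        · rintro ⟨h1, h2, h3⟩
          have hgb := (key (ω₁, ω₂)).mpr ⟨h1, h2⟩
          exact ⟨by rw [hf (ω₁, ω₂), hgb]; exact h3, hgb⟩
      refine Finset.sum_congr rfl fun ω₁ _ => Finset.sum_congr rfl fun ω₂ _ => ?_
      by_cases h1 : A ω₁ b₂ = b₁ <;>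
        by_cases h2 : G₂ ω₂ = b₂ ∧ F ω₂ (e b₁ b₂) = a <;>
        simp [hiff ω₁ ω₂, h1, h2]
    have e4 : probOf (fun ω : Ω₁ × Ω₂ => μ₁ ω.1 * μ₂ ω.2)
          (fun ω => (g ω, h ω)) (e b₁ b₂, c)
        = (∑ ω₁, if A ω₁ b₂ = b₁ ∧ h₁ ω₁ = c then μ₁ ω₁ else 0)
          * (∑ ω₂, if G₂ ω₂ = b₂ then μ₂ ω₂ else 0) := by
      unfold probOf
      rw [Fintype.sum_prod_type, Finset.sum_mul_sum]
      have hiff : ∀ ω₁ ω₂, ((g (ω₁, ω₂), h (ω₁, ω₂)) = (e b₁ b₂, c))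
          ↔ ((A ω₁ b₂ = b₁ ∧ h₁ ω₁ = c) ∧ (G₂ ω₂ = b₂)) := by
        intro ω₁ ω₂
        rw [Prod.mk.injEq]
        constructor
        · rintro ⟨hgb, hc⟩
          obtain ⟨h1, h2⟩ := (key (ω₁, ω₂)).mp hgb
          exact ⟨⟨h1, by rw [← hh (ω₁, ω₂)]; exact hc⟩, h2⟩
        · rintro ⟨⟨h1, hc⟩, h2⟩
          exact ⟨(key (ω₁, ω₂)).mpr ⟨h1, h2⟩, by rw [hh (ω₁, ω₂)]; exact hc⟩
      refine Finset.sum_congr rfl fun ω₁ _ => Finset.sum_congr rfl fun ω₂ _ => ?_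
      by_cases h1 : A ω₁ b₂ = b₁ ∧ h₁ ω₁ = c <;>
        by_cases h2 : G₂ ω₂ = b₂ <;>
        simp [hiff ω₁ ω₂, h1, h2]
    rw [e1, e2, e3, e4]
    ring
  · have hzero : ∀ ω : Ω₁ × Ω₂, g ω ≠ b := fun ω hq => hb ⟨_, _, (hg ω).symm.trans hq⟩
    have z2 : probOf (fun ω : Ω₁ × Ω₂ => μ₁ ω.1 * μ₂ ω.2) g b = 0 :=
      Finset.sum_eq_zero fun ω _ => if_neg (hzero ω)
    have z4 : probOf (fun ω : Ω₁ × Ω₂ => μ₁ ω.1 * μ₂ ω.2)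
        (fun ω => (g ω, h ω)) (b, c) = 0 :=
      Finset.sum_eq_zero fun ω _ => if_neg fun hq => hzero ω (congrArg Prod.fst hq)
    rw [z2, z4]
    ring



lemma probOf_congr_equiv {Ω Ω' δ : Type*} [Fintype Ω] [Fintype Ω'] (E : Ω ≃ Ω')
    {μ : Ω → ℝ} (μ' : Ω' → ℝ) (k : Ω → δ) (k' : Ω' → δ)
    (hμ : ∀ ω, μ ω = μ' (E ω)) (hk : ∀ ω, k ω = k' (E ω)) (d : δ) :
    probOf μ k d = probOf μ' k' d := by
  unfold probOf
  rw [← Equiv.sum_comp E (fun ω' => if k' ω' = d then μ' ω' else 0)]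
  refine Finset.sum_congr rfl fun ω _ => ?_
  by_cases hc : k' (E ω) = d <;> simp [hk ω, hμ ω, hc]

lemma markovChain_comp {Ω Ω' α β γ : Type*} [Fintype Ω] [Fintype Ω'] (E : Ω ≃ Ω')
    (μ' : Ω' → ℝ) (f' : Ω' → α) (g' : Ω' → β) (h' : Ω' → γ)
    {μ : Ω → ℝ} {f : Ω → α} {g : Ω → β} {h : Ω → γ}
    (hμ : ∀ ω, μ ω = μ' (E ω)) (hf : ∀ ω, f ω = f' (E ω))
    (hg : ∀ ω, g ω = g' (E ω)) (hh : ∀ ω, h ω = h' (E ω))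
    (H : MarkovChain μ' f' g' h') : MarkovChain μ f g h := by
  intro a b c
  rw [probOf_congr_equiv E μ' (fun ω => (f ω, g ω, h ω)) (fun ω' => (f' ω', g' ω', h' ω'))
        hμ (fun ω => by simp only [hf ω, hg ω, hh ω]) (a, b, c),
      probOf_congr_equiv E μ' g g' hμ hg b,
      probOf_congr_equiv E μ' (fun ω => (f ω, g ω)) (fun ω' => (f' ω', g' ω'))
        hμ (fun ω => by simp only [hf ω, hg ω]) (a, b),
      probOf_congr_equiv E μ' (fun ω => (g ω, h ω)) (fun ω' => (g' ω', h' ω'))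
        hμ (fun ω => by simp only [hg ω, hh ω]) (b, c)]
  exact H a b c

def splitAt {W : Type*} {n : ℕ} (i : Fin n) : (Fin n → W) ≃ W × ({j : Fin n // j ≠ i} → W) where
  toFun w := (w i, fun j => w j.1)
  invFun ω j := if h : j = i then ω.1 else ω.2 ⟨j, h⟩
  left_inv w := by
    funext j
    dsimp only
    split_ifs with h
    · subst h; rfl
    · rfl
  right_inv ω := by
    refine Prod.ext ?_ ?_
    · simp
    · funext j
      simp [j.2]

lemma iid_split {W : Type*} [Fintype W] (p : W → ℝ) {n : ℕ} (i : Fin n) (w : Fin n → W) :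
    iid p n w = p (w i) * ∏ j : {j : Fin n // j ≠ i}, p (w j.1) := by
  unfold iid
  rw [← Finset.mul_prod_erase Finset.univ (fun j => p (w j)) (Finset.mem_univ i)]
  congr 1
  exact (Finset.prod_subtype (p := fun j => j ≠ i) (Finset.univ.erase i) (fun j => by simp) (fun j => p (w j)))

def reconB {α : Type*} {n : ℕ} (i : Fin n) (x : α) (r : {j : Fin n // j ≠ i} → α) : Fin n → α :=
  fun j => if h : j = i then x else r ⟨j, h⟩

lemma reconB_eq {α : Type*} {n : ℕ} {i : Fin n} (x : Fin n → α) (a : α)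
    (r : {j : Fin n // j ≠ i} → α) (ha : a = x i) (hr : ∀ j, r j = x j.1) :
    reconB i a r = x := by
  funext j
  unfold reconB
  split_ifs with h
  · subst h; exact ha
  · exact hr ⟨j, h⟩

def reconA {α : Type*} {n : ℕ} (i : Fin n) (x : α)
    (pa : {j : Fin n // j < i} → α) (fu : {j : Fin n // i < j} → α) : Fin n → α :=
  fun j => if h : j = i then x
    else if hl : j < i then pa ⟨j, hl⟩
    else fu ⟨j, lt_of_le_of_ne (le_of_not_gt hl) (Ne.symm h)⟩

lemma reconA_eq {α : Type*} {n : ℕ} {i : Fin n} (x : Fin n → α) (a : α)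
    (pa : {j : Fin n // j < i} → α) (fu : {j : Fin n // i < j} → α)
    (ha : a = x i) (hpa : ∀ j, pa j = x j.1) (hfu : ∀ j, fu j = x j.1) :
    reconA i a pa fu = x := by
  funext j
  unfold reconA
  split_ifs with h hl
  · subst h; exact ha
  · exact hpa ⟨j, hl⟩
  · exact hfu _


end AuxMarkov

set_option maxHeartbeats 2000000

/-- **Markov conditions for the auxiliary random variables in the DSC/delivery converse.**
For a DSC/delivery code of blocklength `n`, with `M_AR = φ_AR(X^n)`, `M_BR = φ_BR(Y^n)`,
`M_RA = φ_RA(Z^n, M_AR, M_BR)`, `M_RB = φ_RB(Z^n, M_AR, M_BR)`,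
`U_{1,i} = (M_AR, X^{i-1}, Y_{i+1}^n)`, `U_{2,i} = (M_BR, X_{i+1}^n, Y^{i-1})`,
`V_{1,i} = M_RB` and `V_{2,i} = M_RA`, the Markov chains
(i) `U_{1,i} − X_i − (Y_i, Z_i)`, (ii) `U_{2,i} − Y_i − (X_i, Z_i)` and
(iii) `(V_{1,i}, V_{2,i}) − (Z_i, U_{1,i}, U_{2,i}) − (X_i, Y_i)` hold for every `i`,
under the i.i.d. source distribution. -/
theorem dsc_auxiliary_markov_conditions
    {𝒳 𝒴 𝒵 : Type*} [Fintype 𝒳] [Fintype 𝒴] [Fintype 𝒵]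
    (p : 𝒳 × 𝒴 × 𝒵 → ℝ) (hp : IsPMF p) (n : ℕ)
    (MAR MBR MRA MRB : FinAlph)
    (φAR : (Fin n → 𝒳) → MAR.carrier)
    (φBR : (Fin n → 𝒴) → MBR.carrier)
    (φRA : (Fin n → 𝒵) → MAR.carrier → MBR.carrier → MRA.carrier)
    (φRB : (Fin n → 𝒵) → MAR.carrier → MBR.carrier → MRB.carrier)
    (i : Fin n) :
    -- (i)  U_{1,i} − X_i − (Y_i, Z_i)
    MarkovChain (iid p n)
      (fun w => (φAR fun j => (w j).1, past i fun j => (w j).1, fut i fun j => (w j).2.1))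
      (fun w => (w i).1)
      (fun w => ((w i).2.1, (w i).2.2)) ∧
    -- (ii)  U_{2,i} − Y_i − (X_i, Z_i)
    MarkovChain (iid p n)
      (fun w => (φBR fun j => (w j).2.1, fut i fun j => (w j).1, past i fun j => (w j).2.1))
      (fun w => (w i).2.1)
      (fun w => ((w i).1, (w i).2.2)) ∧
    -- (iii)  (V_{1,i}, V_{2,i}) − (Z_i, U_{1,i}, U_{2,i}) − (X_i, Y_i)
    MarkovChain (iid p n)
      (fun w => (φRB (fun j => (w j).2.2) (φAR fun j => (w j).1) (φBR fun j => (w j).2.1),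
        φRA (fun j => (w j).2.2) (φAR fun j => (w j).1) (φBR fun j => (w j).2.1)))
      (fun w => ((w i).2.2,
        (φAR fun j => (w j).1, past i fun j => (w j).1, fut i fun j => (w j).2.1),
        (φBR fun j => (w j).2.1, fut i fun j => (w j).1, past i fun j => (w j).2.1)))
      (fun w => ((w i).1, (w i).2.1)) := by
  refine ⟨?_, ?_, ?_⟩
  · -- (i)  U_{1,i} − X_i − (Y_i, Z_i)
    refine markovChain_comp (splitAt i)
      (fun ω : (𝒳 × 𝒴 × 𝒵) × ({j : Fin n // j ≠ i} → 𝒳 × 𝒴 × 𝒵) => p ω.1 * ∏ j, p (ω.2 j))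
      (fun ω => (φAR (reconB i ω.1.1 fun j => (ω.2 j).1),
        fun j : {j : Fin n // j < i} => (ω.2 ⟨j.1, ne_of_lt j.2⟩).1,
        fun j : {j : Fin n // i < j} => (ω.2 ⟨j.1, ne_of_gt j.2⟩).2.1))
      (fun ω => ω.1.1)
      (fun ω => (ω.1.2.1, ω.1.2.2))
      (fun w => iid_split p i w) ?_ (fun w => rfl) (fun w => rfl) ?_
    · intro w
      exact (congrArg (fun X : Fin n → 𝒳 =>
          (φAR X, past i fun j => (w j).1, fut i fun j => (w j).2.1))
        (reconB_eq (fun k => (w k).1) _ _ rfl fun j => rfl)).symm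
    · exact markov_core p (fun ω₂ : {j : Fin n // j ≠ i} → 𝒳 × 𝒴 × 𝒵 => ∏ j, p (ω₂ j))
        (fun _ : {j : Fin n // j ≠ i} → 𝒳 × 𝒴 × 𝒵 => ()) (fun (ω₁ : 𝒳 × 𝒴 × 𝒵) (_ : Unit) => ω₁.1) (fun (x : 𝒳) (_ : Unit) => x)
        (fun b₁ b₂ b₁' b₂' hq => ⟨hq, Subsingleton.elim _ _⟩)
        (fun (ω₂ : {j : Fin n // j ≠ i} → 𝒳 × 𝒴 × 𝒵) (x : 𝒳) => (φAR (reconB i x fun j => (ω₂ j).1),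
          fun j : {j : Fin n // j < i} => (ω₂ ⟨j.1, ne_of_lt j.2⟩).1,
          fun j : {j : Fin n // i < j} => (ω₂ ⟨j.1, ne_of_gt j.2⟩).2.1))
        (fun ω₁ : 𝒳 × 𝒴 × 𝒵 => (ω₁.2.1, ω₁.2.2))
        _ _ _ (fun ω => rfl) (fun ω => rfl) (fun ω => rfl)
  · -- (ii)  U_{2,i} − Y_i − (X_i, Z_i)
    refine markovChain_comp (splitAt i)
      (fun ω : (𝒳 × 𝒴 × 𝒵) × ({j : Fin n // j ≠ i} → 𝒳 × 𝒴 × 𝒵) => p ω.1 * ∏ j, p (ω.2 j))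
      (fun ω => (φBR (reconB i ω.1.2.1 fun j => (ω.2 j).2.1),
        fun j : {j : Fin n // i < j} => (ω.2 ⟨j.1, ne_of_gt j.2⟩).1,
        fun j : {j : Fin n // j < i} => (ω.2 ⟨j.1, ne_of_lt j.2⟩).2.1))
      (fun ω => ω.1.2.1)
      (fun ω => (ω.1.1, ω.1.2.2))
      (fun w => iid_split p i w) ?_ (fun w => rfl) (fun w => rfl) ?_
    · intro w
      exact (congrArg (fun Y : Fin n → 𝒴 =>
          (φBR Y, fut i fun j => (w j).1, past i fun j => (w j).2.1))
        (reconB_eq (fun k => (w k).2.1) _ _ rfl fun j => rfl)).symm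
    · exact markov_core p (fun ω₂ : {j : Fin n // j ≠ i} → 𝒳 × 𝒴 × 𝒵 => ∏ j, p (ω₂ j))
        (fun _ : {j : Fin n // j ≠ i} → 𝒳 × 𝒴 × 𝒵 => ()) (fun (ω₁ : 𝒳 × 𝒴 × 𝒵) (_ : Unit) => ω₁.2.1) (fun (y : 𝒴) (_ : Unit) => y)
        (fun b₁ b₂ b₁' b₂' hq => ⟨hq, Subsingleton.elim _ _⟩)
        (fun (ω₂ : {j : Fin n // j ≠ i} → 𝒳 × 𝒴 × 𝒵) (y : 𝒴) => (φBR (reconB i y fun j => (ω₂ j).2.1),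
          fun j : {j : Fin n // i < j} => (ω₂ ⟨j.1, ne_of_gt j.2⟩).1,
          fun j : {j : Fin n // j < i} => (ω₂ ⟨j.1, ne_of_lt j.2⟩).2.1))
        (fun ω₁ : 𝒳 × 𝒴 × 𝒵 => (ω₁.1, ω₁.2.2))
        _ _ _ (fun ω => rfl) (fun ω => rfl) (fun ω => rfl)
  · -- (iii)  (V_{1,i}, V_{2,i}) − (Z_i, U_{1,i}, U_{2,i}) − (X_i, Y_i)
    refine markovChain_comp (splitAt i)
      (fun ω : (𝒳 × 𝒴 × 𝒵) × ({j : Fin n // j ≠ i} → 𝒳 × 𝒴 × 𝒵) => p ω.1 * ∏ j, p (ω.2 j))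
      (fun ω =>
        (φRB (reconB i ω.1.2.2 fun j => (ω.2 j).2.2)
          (φAR (reconA i ω.1.1
            (fun j : {j : Fin n // j < i} => (ω.2 ⟨j.1, ne_of_lt j.2⟩).1)
            (fun j : {j : Fin n // i < j} => (ω.2 ⟨j.1, ne_of_gt j.2⟩).1)))
          (φBR (reconA i ω.1.2.1
            (fun j : {j : Fin n // j < i} => (ω.2 ⟨j.1, ne_of_lt j.2⟩).2.1)
            (fun j : {j : Fin n // i < j} => (ω.2 ⟨j.1, ne_of_gt j.2⟩).2.1))),
         φRA (reconB i ω.1.2.2 fun j => (ω.2 j).2.2)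
          (φAR (reconA i ω.1.1
            (fun j : {j : Fin n // j < i} => (ω.2 ⟨j.1, ne_of_lt j.2⟩).1)
            (fun j : {j : Fin n // i < j} => (ω.2 ⟨j.1, ne_of_gt j.2⟩).1)))
          (φBR (reconA i ω.1.2.1
            (fun j : {j : Fin n // j < i} => (ω.2 ⟨j.1, ne_of_lt j.2⟩).2.1)
            (fun j : {j : Fin n // i < j} => (ω.2 ⟨j.1, ne_of_gt j.2⟩).2.1)))))
      (fun ω =>
        (ω.1.2.2,
         (φAR (reconA i ω.1.1
            (fun j : {j : Fin n // j < i} => (ω.2 ⟨j.1, ne_of_lt j.2⟩).1)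
            (fun j : {j : Fin n // i < j} => (ω.2 ⟨j.1, ne_of_gt j.2⟩).1)),
          fun j : {j : Fin n // j < i} => (ω.2 ⟨j.1, ne_of_lt j.2⟩).1,
          fun j : {j : Fin n // i < j} => (ω.2 ⟨j.1, ne_of_gt j.2⟩).2.1),
         (φBR (reconA i ω.1.2.1
            (fun j : {j : Fin n // j < i} => (ω.2 ⟨j.1, ne_of_lt j.2⟩).2.1)
            (fun j : {j : Fin n // i < j} => (ω.2 ⟨j.1, ne_of_gt j.2⟩).2.1)),
          fun j : {j : Fin n // i < j} => (ω.2 ⟨j.1, ne_of_gt j.2⟩).1,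
          fun j : {j : Fin n // j < i} => (ω.2 ⟨j.1, ne_of_lt j.2⟩).2.1)))
      (fun ω => (ω.1.1, ω.1.2.1))
      (fun w => iid_split p i w) ?_ ?_ (fun w => rfl) ?_
    · intro w
      exact (congrArg (fun q : (Fin n → 𝒵) × (Fin n → 𝒳) × (Fin n → 𝒴) =>
          (φRB q.1 (φAR q.2.1) (φBR q.2.2), φRA q.1 (φAR q.2.1) (φBR q.2.2)))
        (congrArg₂ Prod.mk (reconB_eq (fun k => (w k).2.2) _ _ rfl fun j => rfl)
          (congrArg₂ Prod.mk
            (reconA_eq (fun k => (w k).1) _ _ _ rfl (fun j => rfl) (fun j => rfl))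
            (reconA_eq (fun k => (w k).2.1) _ _ _ rfl (fun j => rfl) (fun j => rfl))))).symm
    · intro w
      exact (congrArg (fun q : (Fin n → 𝒳) × (Fin n → 𝒴) =>
          ((w i).2.2,
           (φAR q.1, past i fun j => (w j).1, fut i fun j => (w j).2.1),
           (φBR q.2, fut i fun j => (w j).1, past i fun j => (w j).2.1)))
        (congrArg₂ Prod.mk
          (reconA_eq (fun k => (w k).1) _ _ _ rfl (fun j => rfl) (fun j => rfl))
          (reconA_eq (fun k => (w k).2.1) _ _ _ rfl (fun j => rfl) (fun j => rfl)))).symm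
    · exact markov_core p (fun ω₂ : {j : Fin n // j ≠ i} → 𝒳 × 𝒴 × 𝒵 => ∏ j, p (ω₂ j))
        (fun ω₂ : {j : Fin n // j ≠ i} → 𝒳 × 𝒴 × 𝒵 =>
          ((fun j : {j : Fin n // j < i} => (ω₂ ⟨j.1, ne_of_lt j.2⟩).1),
           (fun j : {j : Fin n // i < j} => (ω₂ ⟨j.1, ne_of_gt j.2⟩).2.1),
           (fun j : {j : Fin n // i < j} => (ω₂ ⟨j.1, ne_of_gt j.2⟩).1),
           (fun j : {j : Fin n // j < i} => (ω₂ ⟨j.1, ne_of_lt j.2⟩).2.1)))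
        (fun (ω₁ : 𝒳 × 𝒴 × 𝒵)
            (b₂ : ({j : Fin n // j < i} → 𝒳) × ({j : Fin n // i < j} → 𝒴)
              × ({j : Fin n // i < j} → 𝒳) × ({j : Fin n // j < i} → 𝒴)) =>
          (ω₁.2.2,
           φAR (reconA i ω₁.1 b₂.1
             (fun j : {j : Fin n // i < j} => b₂.2.2.1 j)),
           φBR (reconA i ω₁.2.1 b₂.2.2.2 b₂.2.1)))
        (fun (b₁ : 𝒵 × MAR.carrier × MBR.carrier)
            (b₂ : ({j : Fin n // j < i} → 𝒳) × ({j : Fin n // i < j} → 𝒴)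
              × ({j : Fin n // i < j} → 𝒳) × ({j : Fin n // j < i} → 𝒴)) =>
          (b₁.1, (b₁.2.1, b₂.1, b₂.2.1), (b₁.2.2, b₂.2.2.1, b₂.2.2.2)))
        (by
          rintro ⟨z, m1, m2⟩ ⟨pX, fY, fX, pY⟩ ⟨z', m1', m2'⟩ ⟨pX', fY', fX', pY'⟩ hq
          simp only [Prod.mk.injEq] at hq
          obtain ⟨h1, ⟨h2, h3, h4⟩, h5, h6, h7⟩ := hq
          subst h1; subst h2; subst h3; subst h4; subst h5; subst h6; subst h7
          exact ⟨rfl, rfl⟩)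
        (fun (ω₂ : {j : Fin n // j ≠ i} → 𝒳 × 𝒴 × 𝒵)
            (b : 𝒵 × (MAR.carrier × ({j : Fin n // j < i} → 𝒳) × ({j : Fin n // i < j} → 𝒴))
              × (MBR.carrier × ({j : Fin n // i < j} → 𝒳) × ({j : Fin n // j < i} → 𝒴))) =>
          (φRB (reconB i b.1 fun j => (ω₂ j).2.2) b.2.1.1 b.2.2.1,
           φRA (reconB i b.1 fun j => (ω₂ j).2.2) b.2.1.1 b.2.2.1))
        (fun ω₁ : 𝒳 × 𝒴 × 𝒵 => (ω₁.1, ω₁.2.1))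
        _ _ _ (fun ω => rfl) (fun ω => rfl) (fun ω => rfl)

end IRSC
end
end
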